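/- Every point z of the ideal triangle with vertices 0, 1, ∞ in the upper half-plane satisfies at least one of: Im(z) ≥ √3/2, or Im(−1/z) ≥ √3/2, or Im(1/(1 − z)) ≥ √3/2. In other words, the three horoball neighborhoods of the vertices with boundary horocycle through the center (1 + √3 i)/2 cover the ideal triangle. -/

import Mathlib

/-!
With `z = x + iy`, the horoball at `0` bounded by the horocycle through the center
`(1 + √3 i)/2` is the disc `√3/2 · (x² + y²) ≤ y`, and the boundary condition
`|z - 1/2| ≥ 1/2` of the triangle reads `x ≤ x² + y²`. A point with `x ≤ 1/2` and
`y < √3/2` lies in that disc: for `y ≥ 1/2` already because `x² ≤ 1/4`, and for `y ≤ 1/2`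
because `x/2 ≤ x - x² ≤ y²` gives `x² ≤ x/2 ≤ y² ≤ y/2`. The reflection `z ↦ 1 - z̄`
exchanges the vertices `0` and `1`, so points with `x ≥ 1/2` lie in the horoball at `1`.
-/

open Complex

lemma sqrt_three_div_two_le_div_sq_add_sq {x y : ℝ} (hx₀ : 0 ≤ x) (hx : x ≤ 1 / 2)
    (hy₀ : 0 < y) (hy : y ≤ √3 / 2) (hcirc : x ≤ x ^ 2 + y ^ 2) :
    √3 / 2 ≤ y / (x ^ 2 + y ^ 2) := by
  rw [le_div_iff₀ (by positivity)]
  have hs : √3 ^ 2 = 3 := Real.sq_sqrt (by norm_num)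
  have hs_lt_two : √3 < 2 := by nlinarith [Real.sqrt_nonneg 3]
  rcases le_total (1 / 2) y with hy_large | hy_small
  · have hx_sq : x ^ 2 ≤ 1 / 4 := by nlinarith
    -- `√3/2 · (1/4 + y²) - y = (√3 y - 3/2)(√3 y - 1/2) / (2√3)`
    have hfactor : 0 ≤ (3 / 2 - √3 * y) * (√3 * y - 1 / 2) :=
      mul_nonneg (by nlinarith) (by nlinarith)
    nlinarith
  · have hx_sq : x ^ 2 ≤ y ^ 2 := by nlinarith
    nlinarith

lemma im_neg_one_div (z : ℂ) : (-(1 / z)).im = z.im / (z.re ^ 2 + z.im ^ 2) := by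
  rw [one_div, neg_im, inv_im, neg_div, neg_neg, normSq_apply]
  ring

lemma im_one_div_one_sub (z : ℂ) :
    (1 / (1 - z)).im = z.im / ((1 - z.re) ^ 2 + z.im ^ 2) := by
  rw [one_div, inv_im, normSq_apply]
  simp only [sub_re, sub_im, one_re, one_im]
  ring

lemma re_le_sq_add_sq_of_half_le_norm_sub_half {z : ℂ} (h : 1 / 2 ≤ ‖z - 1 / 2‖) :
    z.re ≤ z.re ^ 2 + z.im ^ 2 := by
  have hsq : (1 / 2 : ℝ) ^ 2 ≤ normSq (z - 1 / 2) := by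
    rw [← Complex.sq_norm]; gcongr
  simp only [normSq_apply, sub_re, sub_im, one_div, inv_re, inv_im, re_ofNat,
    im_ofNat] at hsq
  nlinarith

/-- Every point of the ideal triangle with vertices `0, 1, ∞` in the upper
half-plane lies in one of the three horoball neighborhoods of the vertices
bounded by the horocycles through the center `(1 + √3 i)/2`:
`Im z ≥ √3/2`, or `Im (-1/z) ≥ √3/2`, or `Im (1/(1-z)) ≥ √3/2`. -/
theorem idealTriangle_covered_by_horoballs (z : ℂ)
    (him : 0 < z.im) (h0 : 0 ≤ z.re) (h1 : z.re ≤ 1)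
    (hcirc : 1 / 2 ≤ ‖z - 1 / 2‖) :
    Real.sqrt 3 / 2 ≤ z.im ∨
      Real.sqrt 3 / 2 ≤ (-(1 / z)).im ∨
      Real.sqrt 3 / 2 ≤ (1 / (1 - z)).im := by
  rcases le_or_gt (√3 / 2) z.im with hy | hy
  · exact Or.inl hy
  have hcirc' := re_le_sq_add_sq_of_half_le_norm_sub_half hcirc
  rcases le_total z.re (1 / 2) with hre | hre
  · right; left
    rw [im_neg_one_div]
    exact sqrt_three_div_two_le_div_sq_add_sq h0 hre him hy.le hcirc'
  · right; right
    rw [im_one_div_one_sub]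
    exact sqrt_three_div_two_le_div_sq_add_sq (by linarith) (by linarith) him hy.le
      (by nlinarith)
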